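/- For a connected simple graph G with n ≥ 2 vertices and m edges, every vertex v_i satisfies RE_G(v_i) ≤ d_i/(2m) + √( ((1/d_i) Σ_{j~i} 1/d_j − d_i/(2m)) (1 − d_i/(2m)) ). -/

import Mathlib

open Matrix BigOperators Finset
open scoped Classical

/-- `M * Mᴴ` is positive semidefinite. -/
theorem mulConjTranspose_posSemidef {V : Type*} [Fintype V] [DecidableEq V]
    (M : Matrix V V ℝ) : (M * Mᴴ).PosSemidef := by
  simpa using Matrix.posSemidef_conjTranspose_mul_self Mᴴ

/-- The absolute value `|M| = (M M*)^(1/2)` of a matrix. -/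
noncomputable def matAbs {V : Type*} [Fintype V] [DecidableEq V]
    (M : Matrix V V ℝ) : Matrix V V ℝ :=
  (mulConjTranspose_posSemidef M).isHermitian.eigenvectorUnitary.1 *
    diagonal (Real.sqrt ∘ (mulConjTranspose_posSemidef M).isHermitian.eigenvalues) *
    (star (mulConjTranspose_posSemidef M).isHermitian.eigenvectorUnitary : Matrix V V ℝ)

/-- The Randić matrix of a simple graph. -/
noncomputable def randicMatrix {V : Type*} [Fintype V] [DecidableEq V]
    (G : SimpleGraph V) : Matrix V V ℝ :=
  Matrix.of fun i j =>
    if G.Adj i j then 1 / Real.sqrt ((G.degree i : ℝ) * (G.degree j : ℝ)) else 0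

/-- The Randić energy of a vertex: `RE_G(v) = |R(G)|_{vv}`. -/
noncomputable def vertexRE {V : Type*} [Fintype V] [DecidableEq V]
    (G : SimpleGraph V) (i : V) : ℝ :=
  matAbs (randicMatrix G) i i

theorem matAbs_posSemidef {V : Type*} [Fintype V] [DecidableEq V]
    (M : Matrix V V ℝ) : (matAbs M).PosSemidef := by
  have hD : (diagonal (Real.sqrt ∘
      (mulConjTranspose_posSemidef M).isHermitian.eigenvalues)).PosSemidef :=
    posSemidef_diagonal_iff.mpr fun _ => Real.sqrt_nonneg _
  have := hD.mul_mul_conjTranspose_same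
    ((mulConjTranspose_posSemidef M).isHermitian.eigenvectorUnitary : Matrix V V ℝ)
  unfold matAbs
  convert this using 1
  simp [Matrix.star_eq_conjTranspose]

theorem matAbs_mul_self {V : Type*} [Fintype V] [DecidableEq V]
    (M : Matrix V V ℝ) : matAbs M * matAbs M = M * Mᴴ := by
  have hP := mulConjTranspose_posSemidef M
  set hH := hP.isHermitian with hHdef
  set U : Matrix V V ℝ := hH.eigenvectorUnitary.1 with hUdef
  set D := diagonal (Real.sqrt ∘ hH.eigenvalues) with hDdef
  have hU : (star hH.eigenvectorUnitary : Matrix V V ℝ) * U = 1 :=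
    Unitary.coe_star_mul_self _
  have hDD : D * D = diagonal (RCLike.ofReal ∘ hH.eigenvalues) := by
    rw [hDdef, diagonal_mul_diagonal]
    congr 1
    funext j
    simp only [Function.comp_apply, RCLike.ofReal_real_eq_id, id]
    exact Real.mul_self_sqrt (hP.eigenvalues_nonneg j)
  have hspec := hH.spectral_theorem
  rw [Unitary.conjStarAlgAut_apply] at hspec
  unfold matAbs
  change U * D * (star hH.eigenvectorUnitary : Matrix V V ℝ) *
    (U * D * (star hH.eigenvectorUnitary : Matrix V V ℝ)) = M * Mᴴ
  rw [show U * D * (star hH.eigenvectorUnitary : Matrix V V ℝ) *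
    (U * D * (star hH.eigenvectorUnitary : Matrix V V ℝ)) =
    U * (D * ((star hH.eigenvectorUnitary : Matrix V V ℝ) * U) * D) *
      (star hH.eigenvectorUnitary : Matrix V V ℝ) by simp only [mul_assoc],
    hU, mul_one, hDD]
  exact hspec.symm

theorem psd_fixed_of_sq_fixed {V : Type*} [Fintype V] [DecidableEq V]
    {S : Matrix V V ℝ} (hS : S.PosSemidef) {x : V → ℝ}
    (h : S *ᵥ (S *ᵥ x) = x) : S *ᵥ x = x := by
  set v := S *ᵥ x - x with hv
  have h1 : S *ᵥ v + v = 0 := by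
    simp only [hv, mulVec_sub, h, sub_add_sub_cancel', sub_self]
  have h2 : v ⬝ᵥ (S *ᵥ v) + v ⬝ᵥ v = 0 := by
    have := congrArg (fun w => v ⬝ᵥ w) h1
    simpa [dotProduct_add] using this
  have h3 : 0 ≤ v ⬝ᵥ (S *ᵥ v) := by simpa using hS.dotProduct_mulVec_nonneg v
  have h3b : (0:ℝ) ≤ v ⬝ᵥ v := Finset.sum_nonneg fun j _ => mul_self_nonneg _
  have h4 : v ⬝ᵥ v = 0 := le_antisymm (by linarith) h3b
  exact sub_eq_zero.mp (dotProduct_self_eq_zero.mp h4)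


theorem symm_dot {V : Type*} [Fintype V] [DecidableEq V]
    {B : Matrix V V ℝ} (h : B.IsHermitian) (u w : V → ℝ) :
    u ⬝ᵥ (B *ᵥ w) = (B *ᵥ u) ⬝ᵥ w := by
  rw [dotProduct_mulVec]
  congr 1
  funext j
  simp only [vecMul, mulVec, dotProduct]
  refine Finset.sum_congr rfl fun k _ => ?_
  rw [mul_comm]
  congr 1
  have := congr_fun (congr_fun h j) k
  simpa [conjTranspose_apply] using this

/-- RE_G(v_i) ≤ d_i/(2m) + √(((1/d_i) Σ_{j~i} 1/d_j − d_i/(2m)) (1 − d_i/(2m))). -/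
theorem randic_vertex_energy_le_refined {n : ℕ} (hn : 2 ≤ n) (G : SimpleGraph (Fin n))
    (hG : G.Connected) (i : Fin n) :
    vertexRE G i ≤
      (G.degree i : ℝ) / (2 * (G.edgeFinset.card : ℝ)) +
        Real.sqrt
          (((1 / (G.degree i : ℝ)) * ∑ j ∈ G.neighborFinset i, 1 / (G.degree j : ℝ) -
              (G.degree i : ℝ) / (2 * (G.edgeFinset.card : ℝ))) *
            (1 - (G.degree i : ℝ) / (2 * (G.edgeFinset.card : ℝ)))) := by
  -- notation
  set R := randicMatrix G with hRdef
  set d : Fin n → ℝ := fun j => (G.degree j : ℝ) with hd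
  set m : ℝ := (G.edgeFinset.card : ℝ) with hm
  -- degrees are positive
  have hdpos : ∀ j, 0 < d j := by
    intro j
    have : ∃ w, G.Adj j w := by
      obtain ⟨k, hk⟩ : ∃ k : Fin n, k ≠ j :=
        Fintype.exists_ne_of_one_lt_card (by simpa using (show 1 < n by omega)) j
      obtain ⟨p⟩ := hG.preconnected j k
      cases p with
      | nil => exact absurd rfl hk.symm
      | cons h q => exact ⟨_, h⟩
    have h0 := (G.degree_pos_iff_exists_adj j).mpr this
    simp only [hd]
    exact_mod_cast h0
  -- handshake
  have hhs : ∑ j, d j = 2 * m := by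
    rw [hd, hm]
    push_cast
    exact_mod_cast G.sum_degrees_eq_twice_card_edges
  have hmpos : 0 < 2 * m := by
    rw [← hhs]
    exact Finset.sum_pos (fun j _ => hdpos j) ⟨i, Finset.mem_univ i⟩
  -- the Perron vector
  set x : Fin n → ℝ := fun j => Real.sqrt (d j) / Real.sqrt (2 * m) with hx
  have hxsq : ∀ j, x j ^ 2 = d j / (2 * m) := by
    intro j
    rw [hx]
    rw [div_pow, Real.sq_sqrt (hdpos j).le, Real.sq_sqrt hmpos.le]
  have hxx : x ⬝ᵥ x = 1 := by
    have : ∀ j, x j * x j = d j / (2 * m) := by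
      intro j; rw [← sq]; exact hxsq j
    rw [dotProduct]
    simp_rw [this]
    rw [← Finset.sum_div, hhs, div_self hmpos.ne']
  -- R is symmetric
  have hRH : Rᴴ = R := by
    ext a b
    simp only [conjTranspose_apply, hRdef, randicMatrix, of_apply, star_trivial]
    rw [G.adj_comm, mul_comm]
  -- R fixes x
  have hRx : R *ᵥ x = x := by
    funext a
    have hterm : ∀ j, R a j * x j =
        if G.Adj a j then 1 / (Real.sqrt (d a) * Real.sqrt (2 * m)) else 0 := by
      intro j
      simp only [hRdef, randicMatrix, of_apply, hx, hd]
      split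
      · rename_i hadj
        have hda := hdpos a
        have hdj := hdpos j
        simp only [hd] at hda hdj
        have hsj : Real.sqrt ((G.degree j : ℝ)) ≠ 0 :=
          ne_of_gt (Real.sqrt_pos.mpr hdj)
        rw [Real.sqrt_mul hda.le, div_mul_div_comm, one_mul,
          show Real.sqrt ((G.degree a : ℝ)) * Real.sqrt ((G.degree j : ℝ)) * Real.sqrt (2 * m)
            = Real.sqrt ((G.degree j : ℝ)) * (Real.sqrt ((G.degree a : ℝ)) * Real.sqrt (2 * m)) by ring,
          div_mul_eq_div_div, div_self hsj]
      · simp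
    rw [mulVec, dotProduct]
    simp_rw [hterm]
    rw [← Finset.sum_filter, Finset.sum_const]
    have hcard : (Finset.univ.filter (G.Adj a)).card = G.degree a := by
      rw [← G.neighborFinset_eq_filter, G.card_neighborFinset_eq_degree]
    rw [hcard, nsmul_eq_mul]
    have hda := hdpos a
    rw [hx]
    simp only [hd] at hda ⊢
    rw [mul_one_div]
    have key : ((G.degree a : ℝ)) = Real.sqrt ((G.degree a : ℝ)) * Real.sqrt ((G.degree a : ℝ)) :=
      (Real.mul_self_sqrt hda.le).symm
    have h2m : Real.sqrt (2 * m) ≠ 0 := ne_of_gt (Real.sqrt_pos.mpr hmpos)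
    have hsa : Real.sqrt ((G.degree a : ℝ)) ≠ 0 := ne_of_gt (Real.sqrt_pos.mpr hda)
    rw [div_eq_div_iff (mul_ne_zero hsa h2m) h2m, ← mul_assoc, ← key]
  -- the absolute value B
  set B := matAbs R with hBdef
  have hBpsd : B.PosSemidef := matAbs_posSemidef R
  have hBherm : B.IsHermitian := hBpsd.1
  have hBB : B * B = R * R := by
    have h0 := matAbs_mul_self R
    exact h0.trans (by rw [hRH])
  have hRherm : R.IsHermitian := hRH
  have hR2herm : (R * R).IsHermitian := by
    unfold Matrix.IsHermitian
    rw [conjTranspose_mul, hRH]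
  have hR2x : (R * R) *ᵥ x = x := by rw [← mulVec_mulVec, hRx, hRx]
  have hBx : B *ᵥ x = x := by
    apply psd_fixed_of_sq_fixed hBpsd
    rw [mulVec_mulVec, hBB, hR2x]
  -- the decomposition e = x i • x + y
  set e : Fin n → ℝ := Pi.single i 1 with he
  set y : Fin n → ℝ := e - x i • x with hy
  have hex : e ⬝ᵥ x = x i := by simp [he]
  have hxe : x ⬝ᵥ e = x i := by simp [he]
  have hee : e ⬝ᵥ e = 1 := by simp [he]
  have hxy : x ⬝ᵥ y = 0 := by
    simp [hy, dotProduct_sub, dotProduct_smul, hxx, hxe, smul_eq_mul]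
  have hyx : y ⬝ᵥ x = 0 := by
    simp [hy, sub_dotProduct, smul_dotProduct, hxx, hex, smul_eq_mul]
  have hyy : y ⬝ᵥ y = 1 - x i ^ 2 := by
    simp only [hy, sub_dotProduct, dotProduct_sub, smul_dotProduct, dotProduct_smul,
      smul_eq_mul, hee, hex, hxe, hxx]
    ring
  have hei : e = x i • x + y := by rw [hy]; abel
  -- B i i = x i ^ 2 + y ⬝ᵥ B y
  set t : ℝ := y ⬝ᵥ (B *ᵥ y) with ht
  have hBiie : B i i = e ⬝ᵥ (B *ᵥ e) := by
    simp [he, mulVec, dotProduct_single, single_dotProduct]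
  have hBii : B i i = x i ^ 2 + t := by
    rw [hBiie]
    have hBe : B *ᵥ e = x i • x + B *ᵥ y := by
      rw [hei, mulVec_add, mulVec_smul, hBx]
    have hxBy : x ⬝ᵥ (B *ᵥ y) = 0 := by rw [symm_dot hBherm, hBx, hxy]
    rw [hBe]
    nth_rewrite 1 [hei]
    simp only [add_dotProduct, dotProduct_add, smul_dotProduct, dotProduct_smul,
      smul_eq_mul, hxx, hxy, hyx, hxBy]
    ring
  -- (R*R) i i
  have hR2ii : (R * R) i i =
      (1 / d i) * ∑ j ∈ G.neighborFinset i, 1 / (d j) := by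
    rw [mul_apply]
    have hterm : ∀ j, R i j * R j i = if G.Adj i j then (1 / d i) * (1 / d j) else 0 := by
      intro j
      have hsymm : R j i = R i j := by
        have h1 := congr_fun (congr_fun hRH i) j
        simpa [conjTranspose_apply] using h1
      rw [hsymm]
      simp only [hRdef, randicMatrix, of_apply, hd]
      split
      · rename_i hadj
        have hdi := hdpos i
        have hdj := hdpos j
        simp only [hd] at hdi hdj
        rw [div_mul_div_comm, one_mul, Real.mul_self_sqrt (by positivity), one_div_mul_eq_div,
          div_div, one_div, one_div, mul_comm]
      · simp
    simp_rw [hterm]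
    rw [← Finset.sum_filter, ← G.neighborFinset_eq_filter, Finset.mul_sum]
  -- By ⬝ By
  have hBy2 : (B *ᵥ y) ⬝ᵥ (B *ᵥ y) = (R * R) i i - x i ^ 2 := by
    have hswap : (B *ᵥ y) ⬝ᵥ (B *ᵥ y) = y ⬝ᵥ ((R * R) *ᵥ y) := by
      rw [(symm_dot hBherm y (B *ᵥ y)).symm, mulVec_mulVec, hBB]
    rw [hswap]
    have hR2y : (R * R) *ᵥ y = (R * R) *ᵥ e - x i • x := by
      rw [hy, mulVec_sub, mulVec_smul, hR2x]
    rw [hR2y]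
    have hxR2e : x ⬝ᵥ ((R * R) *ᵥ e) = x i := by rw [symm_dot hR2herm, hR2x, hxe]
    have heR2e : e ⬝ᵥ ((R * R) *ᵥ e) = (R * R) i i := by
      simp [he, mulVec, dotProduct_single, single_dotProduct]
    nth_rewrite 1 [hy]
    simp only [sub_dotProduct, dotProduct_sub, smul_dotProduct, dotProduct_smul,
      smul_eq_mul, heR2e, hxR2e, hxx, hex]
    ring
  -- Cauchy-Schwarz
  have hCS : t ≤ Real.sqrt (((R * R) i i - x i ^ 2) * (1 - x i ^ 2)) := by
    have h1 : t ^ 2 ≤ (y ⬝ᵥ y) * ((B *ᵥ y) ⬝ᵥ (B *ᵥ y)) := by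
      have h0 := Finset.sum_mul_sq_le_sq_mul_sq Finset.univ y (B *ᵥ y)
      have ha : y ⬝ᵥ y = ∑ j, y j ^ 2 := by
        rw [dotProduct]; exact Finset.sum_congr rfl fun j _ => (sq (y j)).symm
      have hb : (B *ᵥ y) ⬝ᵥ (B *ᵥ y) = ∑ j, (B *ᵥ y) j ^ 2 := by
        rw [dotProduct]; exact Finset.sum_congr rfl fun j _ => (sq ((B *ᵥ y) j)).symm
      have hc : t = ∑ j, y j * (B *ᵥ y) j := ht
      rw [ha, hb, hc]
      exact h0
    calc t ≤ |t| := le_abs_self t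
      _ = Real.sqrt (t ^ 2) := (Real.sqrt_sq_eq_abs t).symm
      _ ≤ Real.sqrt ((y ⬝ᵥ y) * ((B *ᵥ y) ⬝ᵥ (B *ᵥ y))) := Real.sqrt_le_sqrt h1
      _ = _ := by rw [hyy, hBy2, mul_comm]
  -- assemble
  have hRE : vertexRE G i = B i i := rfl
  have e1 : x i ^ 2 = (G.degree i : ℝ) / (2 * m) := by
    have h1 := hxsq i
    simpa only [hd] using h1
  have e2 : (R * R) i i =
      1 / (G.degree i : ℝ) * ∑ j ∈ G.neighborFinset i, 1 / (G.degree j : ℝ) := by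
    simpa only [hd] using hR2ii
  rw [hRE, hBii, ← e1, ← e2]
  exact (add_le_add_iff_left _).mpr hCS
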